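/- arXiv:2204.12146 — 2 statements merged into one kernel-verified Lean document; each statement's English description precedes it below -/
import Mathlib

section
/- Let d ≥ 1 and let c_d be the constant in Nash's inequality. Then for all u ∈ L¹(ℝ^d) ∩ H¹(ℝ^d) one has ‖u‖_{L²}^{1+2/d} ≤ c_d ‖∇u‖_{L²} ‖u‖_{L¹}^{2/d}. -/
/-!
Averaging `u` over the ball `x + B(0, r)` gives
`μ(B_r) ‖u x‖ ≤ ‖u‖₁ + ∫_{B_r} ‖u (x + h) - u x‖ dh`.
Multiplying by `‖u x‖`, integrating, and applying Cauchy–Schwarz together with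
`‖u (· + h) - u‖₂ ≤ ‖h‖ ‖Du‖₂` (the fundamental theorem of calculus along segments) yields
`μ(B_r) ‖u‖₂² ≤ ‖u‖₁² + μ(B_r) r ‖u‖₂ ‖Du‖₂`. As `μ(B_r)` is proportional to `r ^ d`, the radius
with `μ(B_r) ‖u‖₂² = 2 ‖u‖₁²` turns this into Nash's inequality.
-/

open MeasureTheory Metric Set Module
open scoped ENNReal

section CauchySchwarz

variable {α : Type*} [MeasurableSpace α] {μ : Measure α}

theorem ENNReal.sq_lintegral_mul_le {f g : α → ℝ≥0∞} (hf : AEMeasurable f μ)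
    (hg : AEMeasurable g μ) :
    (∫⁻ a, f a * g a ∂μ) ^ 2 ≤ (∫⁻ a, f a ^ 2 ∂μ) * ∫⁻ a, g a ^ 2 ∂μ := by
  have h := ENNReal.lintegral_mul_le_Lp_mul_Lq μ Real.HolderConjugate.two_two hf hg
  simp only [Pi.mul_apply, ENNReal.rpow_two] at h
  calc (∫⁻ a, f a * g a ∂μ) ^ 2
      ≤ ((∫⁻ a, f a ^ 2 ∂μ) ^ (1 / 2 : ℝ) * (∫⁻ a, g a ^ 2 ∂μ) ^ (1 / 2 : ℝ)) ^ 2 := by gcongr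
    _ = (∫⁻ a, f a ^ 2 ∂μ) * ∫⁻ a, g a ^ 2 ∂μ := by
      rw [mul_pow, ← ENNReal.rpow_two, ← ENNReal.rpow_two, ← ENNReal.rpow_mul, ← ENNReal.rpow_mul]
      norm_num

theorem ENNReal.sq_setLIntegral_le_measure_mul {f : α → ℝ≥0∞} (hf : AEMeasurable f μ) (s : Set α) :
    (∫⁻ a in s, f a ∂μ) ^ 2 ≤ μ s * ∫⁻ a in s, f a ^ 2 ∂μ := by
  simpa [mul_comm (μ s)] using
    ENNReal.sq_lintegral_mul_le (μ := μ.restrict s) hf.restrict (aemeasurable_const (b := 1))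

end CauchySchwarz

theorem eLpNorm_two_sq_eq_lintegral {α G : Type*} [MeasurableSpace α] [NormedAddCommGroup G]
    (f : α → G) (μ : Measure α) : eLpNorm f 2 μ ^ 2 = ∫⁻ x, ‖f x‖ₑ ^ 2 ∂μ := by
  simpa [ENNReal.rpow_two] using
    eLpNorm_nnreal_pow_eq_lintegral (f := f) (μ := μ) (p := 2) two_ne_zero

theorem enorm_sub_le_lintegral_deriv {F : Type*} [NormedAddCommGroup F] [NormedSpace ℝ F]
    [CompleteSpace F] {f : ℝ → F} {a b : ℝ} (hf : ∀ x ∈ Icc a b, DifferentiableAt ℝ f x)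
    (hab : a ≤ b) :
    ‖f b - f a‖ₑ ≤ ∫⁻ x in Icc a b, ‖deriv f x‖ₑ := by
  by_cases hfin : ∫⁻ x in Icc a b, ‖deriv f x‖ₑ = ∞
  · simp [hfin]
  have hint : IntegrableOn (deriv f) (Icc a b) :=
    ⟨aestronglyMeasurable_deriv f _, lt_top_iff_ne_top.2 hfin⟩
  rw [← intervalIntegral.integral_eq_sub_of_hasDerivAt
      (fun x hx => (hf x (uIcc_of_le hab ▸ hx)).hasDerivAt)
      ((intervalIntegrable_iff_integrableOn_Icc_of_le hab).2 hint),
    intervalIntegral.integral_of_le hab, restrict_Ioc_eq_restrict_Icc]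
  exact enorm_integral_le_lintegral_enorm _

theorem measure_mul_enorm_le_lintegral_enorm_add {G H : Type*} [NormedAddCommGroup G]
    [MeasurableSpace G] [BorelSpace G] [NormedAddCommGroup H] {u : G → H} (hu : Continuous u)
    (μ : Measure G) [μ.IsAddLeftInvariant] (s : Set G) (x : G) :
    μ s * ‖u x‖ₑ ≤ ∫⁻ y, ‖u y‖ₑ ∂μ + ∫⁻ h in s, ‖u (x + h) - u x‖ₑ ∂μ :=
  calc μ s * ‖u x‖ₑ = ∫⁻ h in s, ‖u x‖ₑ ∂μ := by rw [setLIntegral_const, mul_comm]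
    _ ≤ ∫⁻ h in s, (‖u (x + h)‖ₑ + ‖u (x + h) - u x‖ₑ) ∂μ := by
        refine lintegral_mono fun h => ?_
        simpa using enorm_sub_le (a := u (x + h)) (b := u (x + h) - u x)
    _ = ∫⁻ h in s, ‖u (x + h)‖ₑ ∂μ + ∫⁻ h in s, ‖u (x + h) - u x‖ₑ ∂μ :=
        lintegral_add_left (Continuous.measurable (by fun_prop)) _
    _ ≤ ∫⁻ y, ‖u y‖ₑ ∂μ + ∫⁻ h in s, ‖u (x + h) - u x‖ₑ ∂μ := by
        refine add_le_add_left ?_ _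
        exact (setLIntegral_le_lintegral _ _).trans_eq
          (lintegral_add_left_eq_self (fun y => ‖u y‖ₑ) x)

variable {E F : Type*} [NormedAddCommGroup E] [NormedSpace ℝ E]
  [NormedAddCommGroup F] [NormedSpace ℝ F] [CompleteSpace F]

theorem enorm_add_sub_sq_le_mul_lintegral_fderiv {u : E → F} (hu : Differentiable ℝ u) (x h : E) :
    ‖u (x + h) - u x‖ₑ ^ 2 ≤
      ‖h‖ₑ ^ 2 * ∫⁻ t in Icc (0 : ℝ) 1, ‖fderiv ℝ u (x + t • h)‖ₑ ^ 2 := by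
  set g : ℝ → F := fun s => u (x + s • h)
  have hg : ∀ t, HasDerivAt g (fderiv ℝ u (x + t • h) h) t :=
    fun t => (hu _).hasFDerivAt.comp_hasDerivAt t
      (by simpa using ((hasDerivAt_id t).smul_const h).const_add x)
  calc ‖u (x + h) - u x‖ₑ ^ 2
      ≤ (∫⁻ t in Icc (0 : ℝ) 1, ‖deriv g t‖ₑ) ^ 2 := by
        gcongr
        simpa [g] using enorm_sub_le_lintegral_deriv (fun t _ => (hg t).differentiableAt)
          zero_le_one
    _ ≤ ∫⁻ t in Icc (0 : ℝ) 1, ‖deriv g t‖ₑ ^ 2 := by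
        simpa using ENNReal.sq_setLIntegral_le_measure_mul (μ := volume)
          (stronglyMeasurable_deriv g).enorm.aemeasurable (Icc (0 : ℝ) 1)
    _ ≤ ∫⁻ t in Icc (0 : ℝ) 1, ‖h‖ₑ ^ 2 * ‖fderiv ℝ u (x + t • h)‖ₑ ^ 2 := by
        refine lintegral_mono fun t => ?_
        rw [(hg t).deriv, ← mul_pow, mul_comm ‖h‖ₑ]
        gcongr
        exact ContinuousLinearMap.le_opENorm _ _
    _ = ‖h‖ₑ ^ 2 * ∫⁻ t in Icc (0 : ℝ) 1, ‖fderiv ℝ u (x + t • h)‖ₑ ^ 2 :=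
        lintegral_const_mul' _ _ (by simp)

variable [MeasurableSpace E] [BorelSpace E]

theorem lintegral_enorm_add_sub_sq_le {u : E → F} (hu : Differentiable ℝ u) (μ : Measure E)
    [SFinite μ] [μ.IsAddRightInvariant] (h : E) :
    ∫⁻ x, ‖u (x + h) - u x‖ₑ ^ 2 ∂μ ≤ ‖h‖ₑ ^ 2 * ∫⁻ x, ‖fderiv ℝ u x‖ₑ ^ 2 ∂μ := by
  have hmeas : Measurable fun p : E × ℝ => ‖fderiv ℝ u (p.1 + p.2 • h)‖ₑ ^ 2 :=
    ((measurable_fderiv ℝ u).comp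
      (continuous_fst.add (continuous_snd.smul continuous_const)).measurable).enorm.pow_const 2
  calc ∫⁻ x, ‖u (x + h) - u x‖ₑ ^ 2 ∂μ
      ≤ ∫⁻ x, ‖h‖ₑ ^ 2 * (∫⁻ t in Icc (0 : ℝ) 1, ‖fderiv ℝ u (x + t • h)‖ₑ ^ 2) ∂μ :=
        lintegral_mono fun x => enorm_add_sub_sq_le_mul_lintegral_fderiv hu x h
    _ = ‖h‖ₑ ^ 2 * ∫⁻ t in Icc (0 : ℝ) 1, (∫⁻ x, ‖fderiv ℝ u (x + t • h)‖ₑ ^ 2 ∂μ) := by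
        rw [lintegral_const_mul' _ _ (by simp),
          lintegral_lintegral_swap hmeas.aemeasurable]
    _ = ‖h‖ₑ ^ 2 * ∫⁻ x, ‖fderiv ℝ u x‖ₑ ^ 2 ∂μ := by
        simp [lintegral_add_right_eq_self (fun y => ‖fderiv ℝ u y‖ₑ ^ 2)]

theorem lintegral_sq_lintegral_closedBall_le [SecondCountableTopology E] {u : E → F}
    (hu : Differentiable ℝ u) (μ : Measure E) [SFinite μ] [μ.IsAddRightInvariant] (r : ℝ) :
    ∫⁻ x, (∫⁻ h in closedBall 0 r, ‖u (x + h) - u x‖ₑ ∂μ) ^ 2 ∂μ ≤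
      (μ (closedBall 0 r) * ENNReal.ofReal r) ^ 2 * ∫⁻ x, ‖fderiv ℝ u x‖ₑ ^ 2 ∂μ := by
  set B := closedBall (0 : E) r
  have hmeas : Measurable fun p : E × E => ‖u (p.1 + p.2) - u p.1‖ₑ ^ 2 :=
    (((hu.continuous.comp (continuous_fst.add continuous_snd)).sub
      (hu.continuous.comp continuous_fst)).enorm.measurable.pow_const 2)
  calc ∫⁻ x, (∫⁻ h in B, ‖u (x + h) - u x‖ₑ ∂μ) ^ 2 ∂μ
      ≤ ∫⁻ x, μ B * (∫⁻ h in B, ‖u (x + h) - u x‖ₑ ^ 2 ∂μ) ∂μ := by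
        refine lintegral_mono fun x => ENNReal.sq_setLIntegral_le_measure_mul ?_ B
        exact ((hu.continuous.comp (continuous_const_add x)).sub
          continuous_const).enorm.measurable.aemeasurable
    _ = μ B * ∫⁻ h in B, (∫⁻ x, ‖u (x + h) - u x‖ₑ ^ 2 ∂μ) ∂μ := by
        rw [lintegral_const_mul _ hmeas.lintegral_prod_right',
          lintegral_lintegral_swap hmeas.aemeasurable]
    _ ≤ μ B * ∫⁻ _ in B, ENNReal.ofReal r ^ 2 * ∫⁻ x, ‖fderiv ℝ u x‖ₑ ^ 2 ∂μ ∂μ := by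
        refine mul_le_mul_right (setLIntegral_mono measurable_const fun h hh => ?_) _
        refine (lintegral_enorm_add_sub_sq_le hu μ h).trans ?_
        rw [← ofReal_norm]
        gcongr
        exact mem_closedBall_zero_iff.1 hh
    _ = (μ B * ENNReal.ofReal r) ^ 2 * ∫⁻ x, ‖fderiv ℝ u x‖ₑ ^ 2 ∂μ := by
        rw [setLIntegral_const]
        ring

theorem measure_closedBall_mul_eLpNorm_two_sq_le [SecondCountableTopology E] {u : E → F}
    (hu : Differentiable ℝ u) (μ : Measure E) [SFinite μ] [μ.IsAddRightInvariant]
    [μ.IsAddLeftInvariant] (r : ℝ) :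
    μ (closedBall 0 r) * eLpNorm u 2 μ ^ 2 ≤
      eLpNorm u 1 μ ^ 2 +
        μ (closedBall 0 r) * ENNReal.ofReal r * eLpNorm u 2 μ * eLpNorm (fderiv ℝ u) 2 μ := by
  set V := μ (closedBall (0 : E) r)
  set w : E → ℝ≥0∞ := fun x => ∫⁻ h in closedBall 0 r, ‖u (x + h) - u x‖ₑ ∂μ
  have hu_meas : Measurable fun x => ‖u x‖ₑ := hu.continuous.enorm.measurable
  have hw_meas : Measurable w :=
    ((hu.continuous.comp (continuous_fst.add continuous_snd)).sub
      (hu.continuous.comp continuous_fst)).enorm.measurable.lintegral_prod_right'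
        (f := fun p : E × E => ‖u (p.1 + p.2) - u p.1‖ₑ)
  have hcross : ∫⁻ x, ‖u x‖ₑ * w x ∂μ ≤
      eLpNorm u 2 μ * (V * ENNReal.ofReal r * eLpNorm (fderiv ℝ u) 2 μ) := by
    rw [← ENNReal.pow_le_pow_left_iff two_ne_zero, mul_pow, eLpNorm_two_sq_eq_lintegral,
      mul_pow, eLpNorm_two_sq_eq_lintegral]
    refine (ENNReal.sq_lintegral_mul_le hu_meas.aemeasurable hw_meas.aemeasurable).trans ?_
    gcongr
    exact lintegral_sq_lintegral_closedBall_le hu μ r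
  calc V * eLpNorm u 2 μ ^ 2 = ∫⁻ x, ‖u x‖ₑ * (V * ‖u x‖ₑ) ∂μ := by
        rw [eLpNorm_two_sq_eq_lintegral, ← lintegral_const_mul _ (hu_meas.pow_const 2)]
        congr 1 with x
        ring
    _ ≤ ∫⁻ x, ‖u x‖ₑ * (eLpNorm u 1 μ + w x) ∂μ := by
        gcongr with x
        exact (measure_mul_enorm_le_lintegral_enorm_add hu.continuous μ _ x).trans_eq
          (by rw [eLpNorm_one_eq_lintegral_enorm])
    _ = eLpNorm u 1 μ ^ 2 + ∫⁻ x, ‖u x‖ₑ * w x ∂μ := by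
        simp_rw [mul_add]
        rw [lintegral_add_left (hu_meas.mul_const _), lintegral_mul_const _ hu_meas,
          ← eLpNorm_one_eq_lintegral_enorm, sq]
    _ ≤ eLpNorm u 1 μ ^ 2 + V * ENNReal.ofReal r * eLpNorm u 2 μ * eLpNorm (fderiv ℝ u) 2 μ := by
        gcongr
        exact hcross.trans_eq (by ring)

theorem measureReal_ball_pos {X : Type*} [PseudoMetricSpace X] [ProperSpace X] [MeasurableSpace X]
    (μ : Measure X) [μ.IsOpenPosMeasure] [IsFiniteMeasureOnCompacts μ] (x : X) {r : ℝ}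
    (hr : 0 < r) : 0 < μ.real (ball x r) :=
  ENNReal.toReal_pos (measure_ball_pos μ x hr).ne' measure_ball_lt_top.ne

theorem rpow_one_add_two_div_le_of_forall {n : ℕ} (hn : n ≠ 0) {c A M G : ℝ} (hc : 0 < c)
    (hA : 0 < A) (hM : 0 < M)
    (h : ∀ r : ℝ, 0 < r → r ^ n * c * A ^ 2 ≤ M ^ 2 + r ^ n * c * r * A * G) :
    A ^ (1 + 2 / n : ℝ) ≤ 2 * (2 / c) ^ (1 / n : ℝ) * G * M ^ (2 / n : ℝ) := by
  have hsq : ∀ x : ℝ, 0 ≤ x → x ^ (2 / n : ℝ) = (x ^ 2) ^ (1 / n : ℝ) := fun x hx => by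
    rw [← Real.rpow_natCast, ← Real.rpow_mul hx]
    ring_nf
  set r := (2 * M ^ 2 / (c * A ^ 2)) ^ (1 / n : ℝ)
  have hr : 0 < r := by positivity
  have hrn : r ^ n = 2 * M ^ 2 / (c * A ^ 2) := by
    simpa only [r, one_div] using
      Real.rpow_inv_natCast_pow (x := 2 * M ^ 2 / (c * A ^ 2)) (by positivity) hn
  -- with this choice of `r`, the first term on the right is half the left-hand side
  have hA_le : A ≤ 2 * r * G := by
    have := h r hr
    rw [hrn] at this
    field_simp at this
    nlinarith
  have hrA : r * A ^ (2 / n : ℝ) = (2 / c) ^ (1 / n : ℝ) * M ^ (2 / n : ℝ) := by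
    rw [hsq A hA.le, hsq M hM.le, ← Real.mul_rpow (by positivity) (by positivity),
      ← Real.mul_rpow (by positivity) (by positivity)]
    congr 1
    field_simp
  calc A ^ (1 + 2 / n : ℝ) = A * A ^ (2 / n : ℝ) := by rw [Real.rpow_add hA, Real.rpow_one]
    _ ≤ 2 * r * G * A ^ (2 / n : ℝ) := by gcongr
    _ = 2 * (2 / c) ^ (1 / n : ℝ) * G * M ^ (2 / n : ℝ) := by
        linear_combination 2 * G * hrA

theorem nash_inequality_of_isAddHaarMeasure [FiniteDimensional ℝ E] (μ : Measure E)
    [μ.IsAddHaarMeasure] (hE : finrank ℝ E ≠ 0) {u : E → F} (hu1 : Integrable u μ)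
    (hu2 : MemLp u 2 μ) (hu : Differentiable ℝ u) (hDu : MemLp (fderiv ℝ u) 2 μ) :
    (eLpNorm u 2 μ).toReal ^ (1 + 2 / finrank ℝ E : ℝ) ≤
      2 * (2 / μ.real (ball 0 1)) ^ (1 / finrank ℝ E : ℝ) * (eLpNorm (fderiv ℝ u) 2 μ).toReal *
        (eLpNorm u 1 μ).toReal ^ (2 / finrank ℝ E : ℝ) := by
  have hM_fin : eLpNorm u 1 μ ≠ ∞ := (memLp_one_iff_integrable.2 hu1).eLpNorm_ne_top
  have hA_fin : eLpNorm u 2 μ ≠ ∞ := hu2.eLpNorm_ne_top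
  have hG_fin : eLpNorm (fderiv ℝ u) 2 μ ≠ ∞ := hDu.eLpNorm_ne_top
  have hc : 0 < μ.real (ball 0 1) := measureReal_ball_pos μ 0 one_pos
  rcases (ENNReal.toReal_nonneg (a := eLpNorm u 2 μ)).eq_or_lt with hA | hA
  · rw [← hA, Real.zero_rpow (by positivity)]
    positivity
  have hM : 0 < (eLpNorm u 1 μ).toReal := by
    refine ENNReal.toReal_pos (fun h1 => hA.ne' ?_) hM_fin
    rw [eLpNorm_congr_ae ((eLpNorm_eq_zero_iff hu1.aestronglyMeasurable one_ne_zero).1 h1)]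
    simp
  refine rpow_one_add_two_div_le_of_forall hE hc hA hM fun r hr => ?_
  have hV_fin : μ (closedBall (0 : E) r) ≠ ∞ := measure_closedBall_lt_top.ne
  have h := ENNReal.toReal_mono (by finiteness) (measure_closedBall_mul_eLpNorm_two_sq_le hu μ r)
  rw [ENNReal.toReal_add (by finiteness) (by finiteness)] at h
  simpa [← measureReal_def, Measure.addHaar_real_closedBall μ 0 hr.le, hr.le] using h

/-- Nash's inequality on ℝ^d. -/
theorem nash_inequality (d : ℕ) (hd : 1 ≤ d) :
    ∃ c : ℝ, 0 < c ∧ ∀ u : EuclideanSpace ℝ (Fin d) → ℝ,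
      Integrable u volume → MemLp u 2 volume → Differentiable ℝ u →
      MemLp (fun x => ‖fderiv ℝ u x‖) 2 volume →
      (eLpNorm u 2 volume).toReal ^ ((1 : ℝ) + 2 / d) ≤
        c * (eLpNorm (fun x => ‖fderiv ℝ u x‖) 2 volume).toReal *
          (eLpNorm u 1 volume).toReal ^ ((2 : ℝ) / d) := by
  have hdim : finrank ℝ (EuclideanSpace ℝ (Fin d)) = d := finrank_euclideanSpace_fin
  have hball := measureReal_ball_pos (volume : Measure (EuclideanSpace ℝ (Fin d))) 0 one_pos
  refine ⟨2 * (2 / volume.real (ball (0 : EuclideanSpace ℝ (Fin d)) 1)) ^ (1 / d : ℝ),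
    by positivity, fun u hu1 hu2 hu hgrad => ?_⟩
  have hDu : MemLp (fderiv ℝ u) 2 volume :=
    (memLp_norm_iff (measurable_fderiv ℝ u).aestronglyMeasurable).1 hgrad
  simpa [hdim, eLpNorm_norm] using
    nash_inequality_of_isAddHaarMeasure volume (by omega) hu1 hu2 hu hDu
end

section
/- Let S, T be two C₀-semigroups of contractions on L²(ℝ^d) with 0 ≤ S(t)f ≤ T(t)f for all t ≥ 0 and all 0 ≤ f ∈ L²(ℝ^d). If 0 ≤ f ∈ L² and t_n ↓ 0 with S(t_n)f → f in L², then T(t_n)f → f in L². -/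
/-!
Write `g = S(tₙ)f` and `h = T(tₙ)f`. Since `0 ≤ g ≤ h` pointwise, `⟪g, h - g⟫ ≥ 0`, so
`‖h - g‖² = ‖h‖² - ‖g‖² - 2⟪g, h - g⟫ ≤ ‖f‖² - ‖g‖²`, using only that `T` is a contraction.
The right-hand side tends to `0` because `g → f`, hence `h - g → 0` and `h → f`.
-/

open MeasureTheory Filter

section InnerProductSpace

variable {E : Type*} [NormedAddCommGroup E] [InnerProductSpace ℝ E]

theorem norm_sub_sq_le_of_inner_sub_nonneg {g h : E} (hgh : 0 ≤ inner ℝ g (h - g)) :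
    ‖h - g‖ ^ 2 ≤ ‖h‖ ^ 2 - ‖g‖ ^ 2 := by
  have hexp := norm_add_sq_real g (h - g)
  rw [add_sub_cancel] at hexp
  linarith

theorem tendsto_of_inner_sub_nonneg_of_norm_le {ι : Type*} {l : Filter ι} {g h : ι → E} {f : E}
    (hg : Tendsto g l (nhds f)) (hh : ∀ i, ‖h i‖ ≤ ‖f‖)
    (hgh : ∀ i, 0 ≤ inner ℝ (g i) (h i - g i)) :
    Tendsto h l (nhds f) := by
  have hbound : ∀ i, ‖h i - g i‖ ^ 2 ≤ ‖f‖ ^ 2 - ‖g i‖ ^ 2 := fun i =>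
    (norm_sub_sq_le_of_inner_sub_nonneg (hgh i)).trans
      (sub_le_sub_right (pow_le_pow_left₀ (norm_nonneg _) (hh i) 2) _)
  have hgap : Tendsto (fun i => ‖f‖ ^ 2 - ‖g i‖ ^ 2) l (nhds 0) :=
    sub_self (‖f‖ ^ 2) ▸ tendsto_const_nhds.sub (hg.norm.pow 2)
  have hsq : Tendsto (fun i => ‖h i - g i‖ ^ 2) l (nhds 0) :=
    squeeze_zero (fun i => by positivity) hbound hgap
  have hdiff : Tendsto (fun i => h i - g i) l (nhds 0) := by
    rw [tendsto_zero_iff_norm_tendsto_zero]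
    simpa using hsq.sqrt
  simpa using hg.add hdiff

end InnerProductSpace

namespace MeasureTheory.L2

variable {α : Type*} [MeasurableSpace α] {μ : Measure α}

theorem inner_nonneg {g h : Lp ℝ 2 μ} (hg : 0 ≤ g) (hh : 0 ≤ h) : 0 ≤ inner ℝ g h := by
  rw [inner_def]
  refine integral_nonneg_of_ae ?_
  filter_upwards [(Lp.coeFn_nonneg _).mpr hg, (Lp.coeFn_nonneg _).mpr hh] with x hgx hhx
  simpa using mul_nonneg hhx hgx

theorem inner_sub_nonneg_of_le {g h : Lp ℝ 2 μ} (hg : 0 ≤ g) (hgh : g ≤ h) :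
    0 ≤ inner ℝ g (h - g) :=
  inner_nonneg hg (sub_nonneg.mpr hgh)

end MeasureTheory.L2

theorem squeeze_strong_continuity_general (d : ℕ)
    (S T : ℝ → (Lp ℝ 2 (volume : Measure (EuclideanSpace ℝ (Fin d))) →L[ℝ]
      Lp ℝ 2 (volume : Measure (EuclideanSpace ℝ (Fin d)))))
    (hTcontr : ∀ t, 0 ≤ t → ∀ f, ‖T t f‖ ≤ ‖f‖)
    (hdom : ∀ t, 0 ≤ t → ∀ f, 0 ≤ f → 0 ≤ S t f ∧ S t f ≤ T t f)
    (f : Lp ℝ 2 (volume : Measure (EuclideanSpace ℝ (Fin d)))) (hf : 0 ≤ f)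
    (ts : ℕ → ℝ) (hts : ∀ n, 0 < ts n)
    (hS : Tendsto (fun n => S (ts n) f) atTop (nhds f)) :
    Tendsto (fun n => T (ts n) f) atTop (nhds f) := by
  refine tendsto_of_inner_sub_nonneg_of_norm_le hS (fun n => hTcontr _ (hts n).le f) fun n => ?_
  obtain ⟨hSf, hST⟩ := hdom _ (hts n).le f hf
  exact L2.inner_sub_nonneg_of_le hSf hST

/-- Squeezing argument: if `0 ≤ S(t)f ≤ T(t)f` for contractions `S, T` and
`S(t_n)f → f` along `t_n ↓ 0`, then also `T(t_n)f → f`. -/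
theorem squeeze_strong_continuity (d : ℕ)
    (S T : ℝ → (Lp ℝ 2 (volume : Measure (EuclideanSpace ℝ (Fin d))) →L[ℝ]
      Lp ℝ 2 (volume : Measure (EuclideanSpace ℝ (Fin d)))))
    (hScontr : ∀ t, 0 ≤ t → ∀ f, ‖S t f‖ ≤ ‖f‖)
    (hTcontr : ∀ t, 0 ≤ t → ∀ f, ‖T t f‖ ≤ ‖f‖)
    (hdom : ∀ t, 0 ≤ t → ∀ f, 0 ≤ f → 0 ≤ S t f ∧ S t f ≤ T t f)
    (f : Lp ℝ 2 (volume : Measure (EuclideanSpace ℝ (Fin d)))) (hf : 0 ≤ f)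
    (ts : ℕ → ℝ) (hts : ∀ n, 0 < ts n) (hanti : Antitone ts)
    (hlim : Tendsto ts atTop (nhds 0))
    (hS : Tendsto (fun n => S (ts n) f) atTop (nhds f)) :
    Tendsto (fun n => T (ts n) f) atTop (nhds f) :=
  squeeze_strong_continuity_general d S T hTcontr hdom f hf ts hts hS
end
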